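/- For the symplectic triple (g, σ, Ω̄) with g = ℝH ⋉ (h ⊕ h) and σ(aH⊕X⊕Y) = (−aH)⊕Y⊕X, the (−1)-eigenspace p = ℝH ⊕ {(X,−X) : X ∈ h} satisfies [p,p] = Δh (the diagonal of h⊕h), which equals the (+1)-eigenspace k; i.e., (g,σ) is a symmetric couple in the sense that [p,p] = k. -/
import Mathlib


/-- The Lie bracket on `g = ℝH ⋉ (h ⊕ h)`, where `h = V ⊕ ℝE` is the Heisenberg
algebra of `(V,Ω)` and `[H, (v,ℓ)⊕(v',ℓ')] = (v,2ℓ)⊕(−v',−2ℓ')`. -/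
noncomputable def gbr {V : Type*} [AddCommGroup V] [Module ℝ V]
    (Ω : V →ₗ[ℝ] V →ₗ[ℝ] ℝ) (x y : ℝ × (V × ℝ) × (V × ℝ)) :
    ℝ × (V × ℝ) × (V × ℝ) :=
  (0,
   (x.1 • y.2.1.1 - y.1 • x.2.1.1,
    2 * (x.1 * y.2.1.2 - y.1 * x.2.1.2) + Ω x.2.1.1 y.2.1.1),
   (-(x.1 • y.2.2.1) + y.1 • x.2.2.1,
    -(2 * (x.1 * y.2.2.2 - y.1 * x.2.2.2)) + Ω x.2.2.1 y.2.2.1))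

/-- The involution `σ(aH ⊕ X ⊕ Y) := (−aH) ⊕ Y ⊕ X`. -/
def gsigma {V : Type*} [AddCommGroup V] (x : ℝ × (V × ℝ) × (V × ℝ)) :
    ℝ × (V × ℝ) × (V × ℝ) :=
  (-x.1, x.2.2, x.2.1)

/-- for the symmetric couple `(g,σ)`, the `(−1)`-eigenspace
`p = ℝH ⊕ {(X,−X)}` of `σ` satisfies `[p,p] = Δh = k`, the `(+1)`-eigenspace. -/
theorem bracket_p_p_eq_k {V : Type*} [AddCommGroup V] [Module ℝ V]
    (Ω : V →ₗ[ℝ] V →ₗ[ℝ] ℝ) (hΩ : ∀ v w : V, Ω v w = - Ω w v)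
    (hnd : ∀ v : V, (∀ w : V, Ω v w = 0) → v = 0) :
    let p : Set (ℝ × (V × ℝ) × (V × ℝ)) := {x | x.2.2 = -x.2.1}
    let k : Set (ℝ × (V × ℝ) × (V × ℝ)) := {x | x.1 = 0 ∧ x.2.2 = x.2.1}
    p = {x | gsigma x = -x} ∧ k = {x | gsigma x = x} ∧
      Submodule.span ℝ {z | ∃ x ∈ p, ∃ y ∈ p, z = gbr Ω x y} = Submodule.span ℝ k := by
  intro p k
  refine ⟨?_, ?_, ?_⟩
  · ext ⟨a, X, Y⟩
    simp only [p, Set.mem_setOf_eq, gsigma, Prod.mk.injEq, Prod.neg_mk]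
    constructor
    · intro h; subst h; simp
    · rintro ⟨-, h, -⟩; exact h
  · ext ⟨a, X, Y⟩
    simp only [k, Set.mem_setOf_eq, gsigma, Prod.mk.injEq]
    constructor
    · rintro ⟨h1, h2⟩; subst h1; subst h2; simp
    · rintro ⟨h1, h2, -⟩; exact ⟨by linarith, h2⟩
  · congr 1
    ext z
    simp only [Set.mem_setOf_eq, p, k]
    constructor
    · rintro ⟨x, hx, y, hy, rfl⟩
      refine ⟨rfl, ?_⟩
      simp only [gbr, hx, hy, Prod.fst_neg, Prod.snd_neg, smul_neg, neg_neg, map_neg,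
        LinearMap.neg_apply, Prod.mk.injEq, mul_neg, neg_sub]
      exact ⟨by abel, by ring⟩
    · rintro ⟨h1, h2⟩
      refine ⟨(1, (0, 0), (0, 0)), by simp [Set.mem_setOf_eq, Prod.neg_mk],
        (0, (z.2.1.1, z.2.1.2 / 2), (-z.2.1.1, -(z.2.1.2 / 2))),
        by simp [Set.mem_setOf_eq, Prod.neg_mk], ?_⟩
      have h3 : z = (0, z.2.1, z.2.1) := by
        rw [Prod.ext_iff, Prod.ext_iff]; exact ⟨h1, rfl, h2⟩
      rw [h3]
      simp only [gbr, Prod.ext_iff, one_smul, zero_smul, smul_zero, map_zero,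
        LinearMap.zero_apply, map_neg, LinearMap.neg_apply, neg_neg, neg_zero,
        add_zero, sub_zero, Prod.mk.injEq]
      norm_num
      ring
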